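/- arXiv:1611.05284 — 2 statements merged into one kernel-verified Lean document; each statement's English description precedes it below -/
import Mathlib

section
/- Let X be a complete, connected, L-linearly connected metric space with no cut points (i.e., X ∖ {p} is connected for every p ∈ X). Then for every p ∈ X and any two points x, y ∈ X ∖ {p}, there is a compact connected set C ⊆ X ∖ {p} containing both x and y. -/
def LinearlyConnected (L : ℝ) (X : Type*) [MetricSpace X] : Prop :=
  ∀ x y : X, ∃ K : Set X, IsCompact K ∧ IsConnected K ∧ x ∈ K ∧ y ∈ K ∧
    Metric.diam K ≤ L * dist x y

/-!
The relation "`x` and `y` lie in a continuum inside `{p}ᶜ`" is an equivalence relation on the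
connected set `{p}ᶜ`, so it suffices that it holds locally. It does, because `{p}ᶜ` is open and
linear connectedness joins `x` to every nearby `y` by a continuum of diameter at most
`L * dist x y`, which therefore stays inside a small ball around `x`.
-/

open Filter Topology Metric

def JoinedByContinuumIn {X : Type*} [TopologicalSpace X] (s : Set X) (x y : X) : Prop :=
  ∃ C : Set X, IsCompact C ∧ IsConnected C ∧ x ∈ C ∧ y ∈ C ∧ C ⊆ s

namespace JoinedByContinuumIn

variable {X : Type*} [TopologicalSpace X] {s : Set X} {x y z : X}

theorem symm (h : JoinedByContinuumIn s x y) : JoinedByContinuumIn s y x :=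
  let ⟨C, hC, hCconn, hx, hy, hCs⟩ := h
  ⟨C, hC, hCconn, hy, hx, hCs⟩

theorem trans (hxy : JoinedByContinuumIn s x y) (hyz : JoinedByContinuumIn s y z) :
    JoinedByContinuumIn s x z :=
  let ⟨C, hC, hCconn, hxC, hyC, hCs⟩ := hxy
  let ⟨D, hD, hDconn, hyD, hzD, hDs⟩ := hyz
  ⟨C ∪ D, hC.union hD, hCconn.union ⟨y, hyC, hyD⟩ hDconn, Or.inl hxC, Or.inr hzD,
    Set.union_subset hCs hDs⟩

end JoinedByContinuumIn

namespace LinearlyConnected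

variable {X : Type*} [MetricSpace X] {L : ℝ} {s : Set X} {x y : X}

theorem eventually_joinedByContinuumIn (hlc : LinearlyConnected L X) (hs : IsOpen s)
    (hx : x ∈ s) : ∀ᶠ y in 𝓝 x, JoinedByContinuumIn s x y := by
  obtain ⟨ε, hε, hball⟩ := Metric.isOpen_iff.mp hs x hx
  have hsmall : ∀ᶠ y in 𝓝 x, L * dist x y < ε := by
    have : Tendsto (fun y => L * dist x y) (𝓝 x) (𝓝 (L * dist x x)) :=
      (continuous_const.dist continuous_id).tendsto x |>.const_mul L
    rw [dist_self, mul_zero] at this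
    exact this.eventually (gt_mem_nhds hε)
  filter_upwards [hsmall] with y hy
  obtain ⟨K, hK, hKconn, hxK, hyK, hdiam⟩ := hlc x y
  refine ⟨K, hK, hKconn, hxK, hyK, fun z hz => hball ?_⟩
  calc dist z x ≤ diam K := dist_le_diam_of_mem hK.isBounded hz hxK
    _ < ε := hdiam.trans_lt hy

theorem joinedByContinuumIn_of_isPreconnected (hlc : LinearlyConnected L X) (hs : IsOpen s)
    (hconn : IsPreconnected s) (hx : x ∈ s) (hy : y ∈ s) : JoinedByContinuumIn s x y :=
  hconn.induction₂ _
    (fun _ hz => nhdsWithin_le_nhds (hlc.eventually_joinedByContinuumIn hs hz))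
    (fun _ _ _ _ _ _ => JoinedByContinuumIn.trans) (fun _ _ _ _ => JoinedByContinuumIn.symm)
    hx hy

end LinearlyConnected

theorem stmt11_general {X : Type*} [MetricSpace X]
    (L : ℝ) (hlc : LinearlyConnected L X)
    (hcut : ∀ p : X, IsPreconnected ({p}ᶜ : Set X)) :
    ∀ (p x y : X), x ≠ p → y ≠ p →
      ∃ C : Set X, IsCompact C ∧ IsConnected C ∧ x ∈ C ∧ y ∈ C ∧ C ⊆ ({p}ᶜ : Set X) :=
  fun p _ _ hx hy =>
    hlc.joinedByContinuumIn_of_isPreconnected isOpen_compl_singleton (hcut p) hx hy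

/-- In a complete, connected, linearly connected space with no cut points, any two points
distinct from `p` lie in a continuum avoiding `p`. -/
theorem stmt11 {X : Type*} [MetricSpace X] [CompleteSpace X] [ConnectedSpace X]
    (L : ℝ) (hL : 1 ≤ L) (hlc : LinearlyConnected L X)
    (hcut : ∀ p : X, IsPreconnected ({p}ᶜ : Set X)) :
    ∀ (p x y : X), x ≠ p → y ≠ p →
      ∃ C : Set X, IsCompact C ∧ IsConnected C ∧ x ∈ C ∧ y ∈ C ∧ C ⊆ ({p}ᶜ : Set X) :=
  stmt11_general L hlc hcut
end

section
/- Let Xₙ be complete metric spaces, fₙ: Xₙ → ℝ² L-Lipschitz quotient mappings, and suppose (Xₙ, pₙ, fₙ) converges in the pointed Gromov-Hausdorff sense to (X, p, f). Then f is an L-Lipschitz quotient mapping. -/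
open Metric

/-- `F : X → Y` is an `L`-Lipschitz quotient mapping. -/
def IsLQ {X Y : Type*} [MetricSpace X] [MetricSpace Y] (L : ℝ) (F : X → Y) : Prop :=
  ∀ (x : X) (r : ℝ), 0 < r →
    ball (F x) (r / L) ⊆ F '' ball x r ∧
    F '' ball x r ⊆ ball (F x) (L * r)

/-- The triples `(M,p,φ)` and `(N,q,ψ)` are `ε`-close at scale `t`. -/
def CloseTriples {M N : Type*} [MetricSpace M] [MetricSpace N]
    (ε t : ℝ) (p : M) (φ : M → EuclideanSpace ℝ (Fin 2))
    (q : N) (ψ : N → EuclideanSpace ℝ (Fin 2)) : Prop :=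
  ∃ (f : M → N) (g : N → M),
    (∀ x ∈ ball p (t / ε), ∀ y ∈ ball p (t / ε), |dist (f x) (f y) - dist x y| ≤ ε * t) ∧
    (∀ x ∈ ball q (t / ε), ∀ y ∈ ball q (t / ε), |dist (g x) (g y) - dist x y| ≤ ε * t) ∧
    dist (f p) q ≤ ε * t ∧ dist (g q) p ≤ ε * t ∧
    (∀ y ∈ ball q (t / (2 * ε)), dist (f (g y)) y ≤ ε * t) ∧
    (∀ x ∈ ball p (t / (2 * ε)), dist (g (f x)) x ≤ ε * t) ∧
    (∀ y ∈ ball q (t / ε), dist (φ (g y)) (ψ y) ≤ ε * t) ∧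
    (∀ x ∈ ball p (t / ε), dist (ψ (f x)) (φ x) ≤ ε * t)

/-!
The Lipschitz bound passes to the limit directly: `F` is uniformly approximated by
`fₙ ∘ gₙ` with `gₙ` almost isometric. For the co-Lipschitz bound, lifting a point through `fₙ`
and carrying it back to the limit space only gives an approximate preimage, within an error
that tends to zero with the closeness of the triples. Since the limit space is complete, these
approximate lifts can be iterated with geometrically decreasing errors; the iterates form a
Cauchy sequence, whose limit is an exact preimage at the required distance.
-/

open Filter Topology

section LipschitzQuotient

variable {X Y : Type*} [MetricSpace X] [MetricSpace Y] {L : ℝ} {F : X → Y}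

lemma IsLQ.dist_le (hL : 0 < L) (h : IsLQ L F) (a b : X) :
    dist (F a) (F b) ≤ L * dist a b := by
  refine le_of_forall_pos_le_add fun η hη => ?_
  have hb : b ∈ ball a (dist a b + η / L) := by
    rw [mem_ball, dist_comm]
    linarith [div_pos hη hL]
  have hFb := mem_ball.1 ((h a _ (by positivity)).2 ⟨b, hb, rfl⟩)
  have hexpand : L * (dist a b + η / L) = L * dist a b + η := by field_simp
  rw [dist_comm (F b), hexpand] at hFb
  exact hFb.le

theorem exists_mem_ball_eq_of_approx_lift [CompleteSpace X] (hF : Continuous F) (hL : 0 ≤ L)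
    {z : Y} (happrox : ∀ x η, 0 < η → ∃ x', dist x' x ≤ L * dist (F x) z + η ∧ dist (F x') z ≤ η)
    {x : X} {r : ℝ} (hr : L * dist (F x) z < r) : ∃ a ∈ ball x r, F a = z := by
  have : Nonempty X := ⟨x⟩
  choose! g hg_dist hg_val using happrox
  set δ := (r - L * dist (F x) z) / (2 * L + 4) with hδ_def
  have hδ : 0 < δ := div_pos (by linarith) (by linarith)
  let u : ℕ → X := fun k => Nat.rec x (fun k w => g w (δ / 2 ^ k)) k
  have hu_succ : ∀ k, u (k + 1) = g (u k) (δ / 2 ^ k) := fun k => rfl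
  have hFu : ∀ k, dist (F (u (k + 1))) z ≤ δ / 2 ^ k := fun k => hg_val _ _ (by positivity)
  have hstep : ∀ k, dist (u (k + 1)) (u (k + 1 + 1)) ≤ 2 * (L + 1) * δ / 2 / 2 ^ k := by
    intro k
    rw [dist_comm, hu_succ (k + 1)]
    calc dist (g (u (k + 1)) (δ / 2 ^ (k + 1))) (u (k + 1))
        ≤ L * dist (F (u (k + 1))) z + δ / 2 ^ (k + 1) := hg_dist _ _ (by positivity)
      _ ≤ L * (δ / 2 ^ k) + δ / 2 ^ k := by
          gcongr
          · exact hFu k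
          · exact one_le_two
          · omega
      _ = 2 * (L + 1) * δ / 2 / 2 ^ k := by ring
  obtain ⟨a, ha⟩ := cauchySeq_tendsto_of_complete (cauchySeq_of_le_geometric_two hstep)
  refine ⟨a, ?_, ?_⟩
  · have hfirst : dist x (u 1) ≤ L * dist (F x) z + δ := by
      rw [dist_comm]
      simpa [u] using hg_dist x δ hδ
    have htail := dist_le_of_le_geometric_two_of_tendsto₀ hstep ha
    have hr_eq : r = L * dist (F x) z + (2 * L + 4) * δ := by
      rw [hδ_def]
      field_simp
      ring
    rw [mem_ball, dist_comm]
    calc dist x a ≤ dist x (u 1) + dist (u 1) a := dist_triangle _ _ _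
      _ ≤ L * dist (F x) z + δ + 2 * (L + 1) * δ := add_le_add hfirst htail
      _ < r := by rw [hr_eq]; linarith
  · have hlim : Tendsto (fun k => F (u (k + 1))) atTop (𝓝 z) :=
      tendsto_iff_dist_tendsto_zero.2 <| squeeze_zero (fun _ => dist_nonneg) hFu
        (tendsto_const_nhds.div_atTop (tendsto_pow_atTop_atTop_of_one_lt one_lt_two))
    exact tendsto_nhds_unique ((hF.tendsto a).comp ha) hlim

theorem isLQ_of_approx_lift [CompleteSpace X] (hL : 0 < L)
    (hlip : ∀ a b, dist (F a) (F b) ≤ L * dist a b)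
    (happrox : ∀ x z η, 0 < η → ∃ x', dist x' x ≤ L * dist (F x) z + η ∧ dist (F x') z ≤ η) :
    IsLQ L F := by
  have hF : Continuous F := (LipschitzWith.of_dist_le_mul (K := ⟨L, hL.le⟩) hlip).continuous
  intro x r hr
  constructor
  · intro z hz
    refine exists_mem_ball_eq_of_approx_lift hF hL.le (fun x' η => happrox x' z η) ?_
    rw [mem_ball, lt_div_iff₀ hL] at hz
    rwa [dist_comm, mul_comm]
  · rintro _ ⟨a, ha, rfl⟩
    rw [mem_ball] at ha ⊢
    exact (hlip a x).trans_lt (mul_lt_mul_of_pos_left ha hL)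

end LipschitzQuotient

section CloseTriples

variable {M N : Type*} [MetricSpace M] [MetricSpace N] {ε t L : ℝ} {p : M} {q : N}
  {φ : M → EuclideanSpace ℝ (Fin 2)} {ψ : N → EuclideanSpace ℝ (Fin 2)}

lemma CloseTriples.dist_le (h : CloseTriples ε t p φ q ψ) (hL : 0 ≤ L)
    (hφ : ∀ a b, dist (φ a) (φ b) ≤ L * dist a b) {a b : N}
    (ha : a ∈ ball q (t / ε)) (hb : b ∈ ball q (t / ε)) :
    dist (ψ a) (ψ b) ≤ L * dist a b + (L + 2) * (ε * t) := by
  obtain ⟨-, g, -, hg, -, -, -, -, hφψ, -⟩ := h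
  have hgab : dist (g a) (g b) ≤ dist a b + ε * t := by
    linarith [(abs_le.1 (hg a ha b hb)).2]
  calc dist (ψ a) (ψ b)
      ≤ dist (ψ a) (φ (g a)) + dist (φ (g a)) (φ (g b)) + dist (φ (g b)) (ψ b) :=
        dist_triangle4 _ _ _ _
    _ ≤ ε * t + L * (dist a b + ε * t) + ε * t := by
        gcongr
        · rw [dist_comm]
          exact hφψ a ha
        · exact (hφ _ _).trans (by gcongr)
        · exact hφψ b hb
    _ = L * dist a b + (L + 2) * (ε * t) := by ring

lemma CloseTriples.exists_approx_lift (h : CloseTriples ε t p φ q ψ) (hL : 0 < L)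
    (hφ : IsLQ L φ) (hε : 0 < ε) (ht : 0 < t) {y : N} {z : EuclideanSpace ℝ (Fin 2)}
    {s : ℝ} (hs : 0 < s) (hz : dist z (ψ y) < s / L)
    (hy : dist y q + s + (L + 2) * (ε * t) < t / (2 * ε)) :
    ∃ y', dist y' y < s + (L + 2) * (ε * t) ∧ dist (ψ y') z ≤ ε * t := by
  obtain ⟨f, g, hf, hg, -, hgq, hfg, -, hφψ, hψφ⟩ := h
  have hδ : 0 < ε * t := mul_pos hε ht
  have hhalf : t / (2 * ε) < t / ε := div_lt_div_of_pos_left ht hε (by linarith)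
  have hy_half : y ∈ ball q (t / (2 * ε)) := by
    rw [mem_ball]
    linarith [mul_pos (by linarith : 0 < L + 2) hδ]
  have hy : y ∈ ball q (t / ε) := ball_subset_ball hhalf.le hy_half
  have hgy : dist (g y) p ≤ dist y q + 2 * (ε * t) :=
    calc dist (g y) p ≤ dist (g y) (g q) + dist (g q) p := dist_triangle _ _ _
      _ ≤ dist y q + ε * t + ε * t := by
          gcongr
          linarith [(abs_le.1 (hg y hy q (mem_ball_self (by positivity)))).2]
      _ = dist y q + 2 * (ε * t) := by ring
  have hz' : dist z (φ (g y)) < (s + L * (ε * t)) / L :=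
    calc dist z (φ (g y)) ≤ dist z (ψ y) + dist (ψ y) (φ (g y)) := dist_triangle _ _ _
      _ < s / L + ε * t := by
          rw [dist_comm (ψ y)]
          exact add_lt_add_of_lt_of_le hz (hφψ y hy)
      _ = (s + L * (ε * t)) / L := by field_simp
  obtain ⟨x', hx', rfl⟩ := (hφ (g y) _ (by positivity)).1 (mem_ball.2 hz')
  rw [mem_ball] at hx'
  have hgy_ball : g y ∈ ball p (t / ε) := by
    rw [mem_ball]
    nlinarith
  have hx'_ball : x' ∈ ball p (t / ε) := by
    rw [mem_ball]
    linarith [dist_triangle x' (g y) p]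
  refine ⟨f x', ?_, hψφ x' hx'_ball⟩
  calc dist (f x') y ≤ dist (f x') (f (g y)) + dist (f (g y)) y := dist_triangle _ _ _
    _ < s + L * (ε * t) + ε * t + ε * t := by
        refine add_lt_add_of_lt_of_le ?_ (hfg y hy_half)
        linarith [(abs_le.1 (hf x' hx'_ball (g y) hgy_ball)).2]
    _ = s + (L + 2) * (ε * t) := by ring

end CloseTriples

section Convergence

lemma eventually_lt_div_nhdsGT_zero (C : ℝ) {t : ℝ} (ht : 0 < t) :
    ∀ᶠ ε in 𝓝[>] (0 : ℝ), C < t / ε := by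
  simpa only [div_eq_mul_inv] using
    (tendsto_inv_nhdsGT_zero.const_mul_atTop ht).eventually_gt_atTop C

lemma eventually_mul_lt_nhdsGT_zero (c : ℝ) {δ : ℝ} (hδ : 0 < δ) :
    ∀ᶠ ε in 𝓝[>] (0 : ℝ), c * ε < δ := by
  have hlim : Tendsto (fun ε : ℝ => c * ε) (𝓝[>] 0) (𝓝 0) := by
    simpa using ((continuous_const_mul c).tendsto 0).mono_left nhdsWithin_le_nhds
  exact hlim.eventually (gt_mem_nhds hδ)

variable {ι : Type*} {M : ι → Type*} [∀ i, MetricSpace (M i)] {N : Type*} [MetricSpace N]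
  {L : ℝ} {p : ∀ i, M i} {φ : ∀ i, M i → EuclideanSpace ℝ (Fin 2)} {q : N}
  {ψ : N → EuclideanSpace ℝ (Fin 2)}

lemma dist_le_of_eventually_closeTriples (hL : 0 ≤ L)
    (hφ : ∀ i a b, dist (φ i a) (φ i b) ≤ L * dist a b)
    (h : ∀ᶠ ε in 𝓝[>] 0, ∃ i, CloseTriples ε 1 (p i) (φ i) q ψ) (a b : N) :
    dist (ψ a) (ψ b) ≤ L * dist a b := by
  refine le_of_forall_pos_lt_add fun δ hδ => ?_
  obtain ⟨ε, ⟨i, hi⟩, ha, hb, hsmall⟩ := (h.and <| (eventually_lt_div_nhdsGT_zero _ one_pos).and <|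
    (eventually_lt_div_nhdsGT_zero _ one_pos).and <| eventually_mul_lt_nhdsGT_zero (L + 2) hδ).exists
  calc dist (ψ a) (ψ b) ≤ L * dist a b + (L + 2) * (ε * 1) := hi.dist_le hL (hφ i) ha hb
    _ < L * dist a b + δ := by rw [mul_one]; linarith

lemma exists_approx_lift_of_eventually_closeTriples (hL : 0 < L) (hφ : ∀ i, IsLQ L (φ i))
    (h : ∀ᶠ ε in 𝓝[>] 0, ∃ i, CloseTriples ε 1 (p i) (φ i) q ψ) (y : N)
    (z : EuclideanSpace ℝ (Fin 2)) {η : ℝ} (hη : 0 < η) :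
    ∃ y', dist y' y ≤ L * dist (ψ y) z + η ∧ dist (ψ y') z ≤ η := by
  set s := L * dist (ψ y) z + η / 2 with hs_def
  have hs : 0 < s := by positivity
  have hz : dist z (ψ y) < s / L := by
    rw [lt_div_iff₀ hL, dist_comm]
    linarith
  obtain ⟨ε, ⟨i, hi⟩, hε, hsmall, hlarge⟩ := (h.and <| eventually_mem_nhdsWithin.and <|
    (eventually_mul_lt_nhdsGT_zero (L + 2) (half_pos hη)).and <|
    eventually_lt_div_nhdsGT_zero (dist y q + s + η / 2) (half_pos one_pos)).exists
  rw [div_div] at hlarge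
  have hε : (0 : ℝ) < ε := hε
  have hsmall : (L + 2) * (ε * 1) < η / 2 := by rwa [mul_one]
  obtain ⟨y', hy'y, hy'z⟩ := hi.exists_approx_lift hL (hφ i) hε one_pos hs hz (by linarith)
  exact ⟨y', by linarith, by nlinarith⟩

end Convergence

theorem stmt15_general (L : ℝ) (hL : 1 ≤ L)
    (X : ℕ → Type*) [∀ n, MetricSpace (X n)]
    (p : ∀ n, X n) (f : ∀ n, X n → EuclideanSpace ℝ (Fin 2))
    (hf : ∀ n, IsLQ L (f n))
    {Y : Type*} [MetricSpace Y] [CompleteSpace Y] (q : Y)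
    (F : Y → EuclideanSpace ℝ (Fin 2))
    (hconv : ∀ R ε : ℝ, 0 < R → 0 < ε → ε < 1 / 10 →
      ∀ᶠ n in Filter.atTop, CloseTriples ε R (p n) (f n) q F) :
    IsLQ L F := by
  have hL0 : 0 < L := by linarith
  have hclose : ∀ᶠ ε in 𝓝[>] 0, ∃ n, CloseTriples ε 1 (p n) (f n) q F := by
    filter_upwards [self_mem_nhdsWithin,
      eventually_mul_lt_nhdsGT_zero 1 (by norm_num : (0 : ℝ) < 1 / 10)] with ε hε hsmall
    exact (hconv 1 ε one_pos hε (by linarith)).exists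
  exact isLQ_of_approx_lift hL0
    (dist_le_of_eventually_closeTriples hL0.le (fun n => (hf n).dist_le hL0) hclose)
    (fun y z _ => exists_approx_lift_of_eventually_closeTriples hL0 hf hclose y z)

/-- A pointed Gromov–Hausdorff limit of `L`-Lipschitz quotient maps to `ℝ²` is an
`L`-Lipschitz quotient map. -/
theorem stmt15 (L : ℝ) (hL : 1 ≤ L)
    (X : ℕ → Type*) [∀ n, MetricSpace (X n)] [∀ n, CompleteSpace (X n)]
    (p : ∀ n, X n) (f : ∀ n, X n → EuclideanSpace ℝ (Fin 2))
    (hf : ∀ n, IsLQ L (f n))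
    {Y : Type*} [MetricSpace Y] [CompleteSpace Y] (q : Y)
    (F : Y → EuclideanSpace ℝ (Fin 2))
    (hconv : ∀ R ε : ℝ, 0 < R → 0 < ε → ε < 1 / 10 →
      ∀ᶠ n in Filter.atTop, CloseTriples ε R (p n) (f n) q F) :
    IsLQ L F :=
  stmt15_general L hL X p f hf q F hconv
end
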